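/- Fix E < 0 and let q(ξ) = 4 Σ_{j=1}^d sinh²(ξ_j/2) and ∂K^E = {ξ ∈ ℝ^d : q(ξ) = |E|}. Then the Gauss map G_E : ∂K^E → 𝕊^{d−1} defined by G_E(ξ) = ∂q(ξ)/|∂q(ξ)| (where ∂q is the gradient of q, which is nonzero on ∂K^E) is a bijection from ∂K^E onto the unit sphere 𝕊^{d−1}. -/

import Mathlib

open MeasureTheory Real

noncomputable section

/-- `q(ξ) = 4 Σ_j sinh²(ξ_j/2)`. -/
def qfun {d : ℕ} (ξ : EuclideanSpace ℝ (Fin d)) : ℝ :=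
  4 * ∑ j, Real.sinh (ξ j / 2) ^ 2

/-!
The gradient of `q` is `2 sinh ξ` coordinatewise. In the coordinates `s = sinh ξ`, a global
diffeomorphism of `ℝ^d`, `q` becomes `Σ 2 (√(1 + s_j²) - 1)`: a continuous function vanishing at
the origin that is strictly increasing and unbounded along every ray from it. Hence each ray meets
the level set `{q = |E|}` exactly once, and the Gauss map is the radial projection `s ↦ s / |s|`
of that level set onto the sphere.
-/

open Set Filter

theorem bijOn_normalize_of_radially_strictMono {E : Type*} [NormedAddCommGroup E]
    [NormedSpace ℝ E] {Q : E → ℝ} {c : ℝ} (hQ : Continuous Q) (hQ0 : Q 0 < c)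
    (hmono : ∀ u ≠ 0, StrictMonoOn (fun t : ℝ => Q (t • u)) (Ici 0))
    (htop : ∀ u ≠ 0, Tendsto (fun t : ℝ => Q (t • u)) atTop atTop) :
    BijOn NormedSpace.normalize {x | Q x = c} (Metric.sphere 0 1) := by
  have hne : ∀ x, Q x = c → x ≠ 0 := by
    rintro x hx rfl
    exact hQ0.ne hx
  refine ⟨fun x hx => by simpa using hne x hx, fun x hx y hy hxy => ?_, fun u hu => ?_⟩
  · obtain ⟨r, hr, rfl⟩ := ((sameRay_iff_inv_norm_smul_eq_of_ne (hne x hx) (hne y hy)).2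
      hxy).exists_pos_left (hne x hx) (hne y hy)
    have hr1 : r = 1 := (hmono x (hne x hx)).injOn hr.le (mem_Ici.2 zero_le_one)
      (by simp only [one_smul]; exact hy.out.trans hx.out.symm)
    rw [hr1, one_smul]
  · have hu1 : ‖u‖ = 1 := by simpa using hu
    have hu0 : u ≠ 0 := by rintro rfl; simp at hu1
    obtain ⟨T, hcT, hT⟩ := ((htop u hu0).eventually_ge_atTop c |>.and
      (eventually_ge_atTop 0)).exists
    obtain ⟨t, ⟨ht0, -⟩, htc⟩ := intermediate_value_Icc hT
      (hQ.comp (continuous_id.smul continuous_const)).continuousOn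
      ⟨by simpa using hQ0.le, hcT⟩
    have htpos : 0 < t := ht0.lt_of_ne <| by
      rintro rfl
      exact hQ0.ne (by simpa using htc)
    refine ⟨t • u, htc, ?_⟩
    rw [NormedSpace.normalize_smul_of_pos htpos, NormedSpace.normalize_eq_self_of_norm_eq_one hu1]

section
variable {ι : Type*}

def sinhVec (ξ : EuclideanSpace ℝ ι) : EuclideanSpace ℝ ι := WithLp.toLp 2 fun j => sinh (ξ j)

theorem sinhVec_bijective : Function.Bijective (sinhVec (ι := ι)) := by
  refine ⟨fun ξ η h => ?_, fun s => ⟨WithLp.toLp 2 fun j => arsinh (s j), ?_⟩⟩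
  · ext j
    exact sinh_injective (congrArg (· j) h :)
  · ext j
    simp [sinhVec]

variable [Fintype ι]

theorem hasGradientAt_sum_comp_apply {g g' : ℝ → ℝ}
    (x : EuclideanSpace ℝ ι) (hg : ∀ j, HasDerivAt g (g' (x j)) (x j)) :
    HasGradientAt (fun y : EuclideanSpace ℝ ι => ∑ j, g (y j))
      (WithLp.toLp 2 fun j => g' (x j)) x := by
  rw [hasGradientAt_iff_hasFDerivAt]
  refine (HasFDerivAt.fun_sum (u := Finset.univ) fun j _ =>
    (hg j).comp_hasFDerivAt x (EuclideanSpace.proj (𝕜 := ℝ) j).hasFDerivAt).congr_fderiv ?_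
  ext v
  simp [PiLp.inner_apply, mul_comm]

def qOfSinh (s : EuclideanSpace ℝ ι) : ℝ := ∑ j, 2 * (√(1 + s j ^ 2) - 1)

theorem continuous_qOfSinh : Continuous (qOfSinh (ι := ι)) := by
  unfold qOfSinh; fun_prop

@[simp]
theorem qOfSinh_zero : qOfSinh (0 : EuclideanSpace ℝ ι) = 0 := by
  simp [qOfSinh]

theorem sqrt_one_add_sq_le_sqrt_one_add_sq {x y : ℝ} (h : |x| ≤ |y|) :
    √(1 + x ^ 2) ≤ √(1 + y ^ 2) :=
  sqrt_le_sqrt (add_le_add_right (sq_le_sq.2 h) 1)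

theorem sqrt_one_add_sq_lt_sqrt_one_add_sq {x y : ℝ} (h : |x| < |y|) :
    √(1 + x ^ 2) < √(1 + y ^ 2) :=
  sqrt_lt_sqrt (by positivity) (add_lt_add_right (sq_lt_sq.2 h) 1)

theorem strictMonoOn_qOfSinh_smul {u : EuclideanSpace ℝ ι} (hu : u ≠ 0) :
    StrictMonoOn (fun t : ℝ => qOfSinh (t • u)) (Ici 0) := by
  intro a ha b hb hab
  obtain ⟨j₀, hj₀⟩ : ∃ j, u j ≠ 0 := Function.ne_iff.1 ((WithLp.ofLp_eq_zero 2).not.2 hu)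
  have habs (j : ι) : |(a • u) j| = a * |u j| ∧ |(b • u) j| = b * |u j| := by
    simp [abs_mul, abs_of_nonneg ha.out, abs_of_nonneg hb.out]
  refine Finset.sum_lt_sum (fun j _ => ?_) ⟨j₀, Finset.mem_univ _, ?_⟩
  · gcongr 2 * (?_ - 1)
    apply sqrt_one_add_sq_le_sqrt_one_add_sq
    rw [(habs j).1, (habs j).2]
    gcongr
  · gcongr 2 * (?_ - 1)
    apply sqrt_one_add_sq_lt_sqrt_one_add_sq
    rw [(habs j₀).1, (habs j₀).2]
    gcongr

theorem two_mul_abs_sub_one_le_qOfSinh (s : EuclideanSpace ℝ ι) (j : ι) :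
    2 * (|s j| - 1) ≤ qOfSinh s :=
  calc 2 * (|s j| - 1) ≤ 2 * (√(1 + s j ^ 2) - 1) := by
        gcongr
        exact abs_le_sqrt (by linarith [sq_nonneg (s j)])
    _ ≤ qOfSinh s := Finset.single_le_sum (f := fun i => 2 * (√(1 + s i ^ 2) - 1))
        (fun i _ => by simp [one_le_sqrt, sq_nonneg]) (Finset.mem_univ j)

theorem tendsto_qOfSinh_smul_atTop {u : EuclideanSpace ℝ ι} (hu : u ≠ 0) :
    Tendsto (fun t : ℝ => qOfSinh (t • u)) atTop atTop := by
  obtain ⟨j, hj⟩ : ∃ j, u j ≠ 0 := Function.ne_iff.1 ((WithLp.ofLp_eq_zero 2).not.2 hu)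
  refine tendsto_atTop_mono (fun t => two_mul_abs_sub_one_le_qOfSinh (t • u) j) ?_
  simp only [PiLp.smul_apply, smul_eq_mul, abs_mul]
  exact (tendsto_atTop_add_const_right _ (-1)
    (tendsto_abs_atTop_atTop.atTop_mul_const (abs_pos.2 hj))).const_mul_atTop two_pos

end

theorem four_mul_sinh_half_sq (x : ℝ) : 4 * sinh (x / 2) ^ 2 = 2 * (cosh x - 1) := by
  rw [show x = 2 * (x / 2) by ring, cosh_two_mul, cosh_sq]
  ring_nf

theorem cosh_eq_sqrt_one_add_sinh_sq (x : ℝ) : cosh x = √(1 + sinh x ^ 2) := by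
  rw [← sqrt_sq (cosh_pos x).le, cosh_sq, add_comm]

theorem qfun_eq_sum_cosh {d : ℕ} : (qfun : EuclideanSpace ℝ (Fin d) → ℝ) =
    fun ξ => ∑ j, 2 * (cosh (ξ j) - 1) := by
  ext ξ
  simp only [qfun, Finset.mul_sum, four_mul_sinh_half_sq]

theorem qfun_eq_qOfSinh {d : ℕ} (ξ : EuclideanSpace ℝ (Fin d)) : qfun ξ = qOfSinh (sinhVec ξ) := by
  simp [qfun_eq_sum_cosh, qOfSinh, sinhVec, cosh_eq_sqrt_one_add_sinh_sq]

theorem gradient_qfun {d : ℕ} (ξ : EuclideanSpace ℝ (Fin d)) :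
    gradient qfun ξ = (2 : ℝ) • sinhVec ξ := by
  rw [qfun_eq_sum_cosh, (hasGradientAt_sum_comp_apply (g' := fun x => 2 * sinh x) ξ fun j =>
    ((hasDerivAt_cosh _).sub_const 1).const_mul 2).gradient]
  ext j
  simp [sinhVec]

theorem gauss_map_bijective_general (d : ℕ) (E : ℝ) (hE : E < 0) :
    (∀ ξ : EuclideanSpace ℝ (Fin d), qfun ξ = |E| → gradient qfun ξ ≠ 0) ∧
    Set.BijOn (fun ξ : EuclideanSpace ℝ (Fin d) =>
        ‖gradient qfun ξ‖⁻¹ • gradient qfun ξ)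
      {ξ : EuclideanSpace ℝ (Fin d) | qfun ξ = |E|}
      (Metric.sphere (0 : EuclideanSpace ℝ (Fin d)) 1) := by
  have hE' : 0 < |E| := abs_pos.2 hE.ne
  have hlevel : {ξ : EuclideanSpace ℝ (Fin d) | qfun ξ = |E|} =
      sinhVec ⁻¹' {s | qOfSinh s = |E|} := by
    ext ξ
    simp [qfun_eq_qOfSinh]
  have hmap : (fun ξ : EuclideanSpace ℝ (Fin d) => ‖gradient qfun ξ‖⁻¹ • gradient qfun ξ) =
      NormedSpace.normalize ∘ sinhVec := by
    ext1 ξ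
    rw [Function.comp_apply, ← NormedSpace.normalize_smul_of_pos two_pos, ← gradient_qfun]
    rfl
  refine ⟨fun ξ hξ => ?_, ?_⟩
  · rw [gradient_qfun, smul_ne_zero_iff]
    refine ⟨two_ne_zero, fun h => hE'.ne ?_⟩
    rw [← hξ, qfun_eq_qOfSinh, h, qOfSinh_zero]
  · rw [hlevel, hmap]
    exact (bijOn_normalize_of_radially_strictMono continuous_qOfSinh (qOfSinh_zero.trans_lt hE')
      (fun _ => strictMonoOn_qOfSinh_smul) (fun _ => tendsto_qOfSinh_smul_atTop)).comp
      sinhVec_bijective.bijOn_preimage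

/-- for `E < 0`, the gradient `∂q` is nonvanishing on
`∂K^E = {ξ : q(ξ) = |E|}` and the Gauss map `G_E(ξ) = ∂q(ξ)/|∂q(ξ)|` is a bijection
from `∂K^E` onto the unit sphere `𝕊^{d-1}`. -/
theorem gauss_map_bijective (d : ℕ) (hd : 0 < d) (E : ℝ) (hE : E < 0) :
    (∀ ξ : EuclideanSpace ℝ (Fin d), qfun ξ = |E| → gradient qfun ξ ≠ 0) ∧
    Set.BijOn (fun ξ : EuclideanSpace ℝ (Fin d) =>
        ‖gradient qfun ξ‖⁻¹ • gradient qfun ξ)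
      {ξ : EuclideanSpace ℝ (Fin d) | qfun ξ = |E|}
      (Metric.sphere (0 : EuclideanSpace ℝ (Fin d)) 1) :=
  gauss_map_bijective_general d E hE

end
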